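/- Let p be an odd prime, let s ≥ 2 and h ≥ 2 be integers, and let G = (ℤ_{2p^s})^h. Let m ≥ 1 and let y_1, …, y_m ∈ ℤ_{2p^s} be such that p does not divide the representative of y_i in {0,…,2p^s−1} for each i (equivalently, each y_i maps to a nonzero element under the natural projection ℤ_{2p^s} → ℤ_p), and let S = {(y_i, 0, …, 0), (−y_i, 0, …, 0) : 1 ≤ i ≤ m} ⊆ G (nonzero entry in the first coordinate only). Then for all a, b ∈ G with b − a = (p^s, 0, …, 0), the complement of Cay(G, S), namely Cay(G, G \ (S ∪ {0})), does not exhibit PGST between a and b. -/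

import Mathlib

open Matrix Filter

/-- Adjacency matrix of the Cayley graph `Cay(G,S)`: `A x y = 1` iff `x - y ∈ S`. -/
noncomputable def cayAdj {G : Type*} [AddCommGroup G] [Fintype G] [DecidableEq G]
    (S : Finset G) : Matrix G G ℂ :=
  Matrix.of fun x y => if x - y ∈ S then 1 else 0

/-- Transition matrix `H(t) = exp(-i t A)` of the Cayley graph `Cay(G,S)`. -/
noncomputable def cayH {G : Type*} [AddCommGroup G] [Fintype G] [DecidableEq G]
    (S : Finset G) (t : ℝ) : Matrix G G ℂ :=
  NormedSpace.exp ((-(Complex.I * (t : ℂ))) • cayAdj S)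

/-- `Cay(G,S)` exhibits pretty good fractional revival (PGFR) between `a` and `b`. -/
def ExhibitsPGFR {G : Type*} [AddCommGroup G] [Fintype G] [DecidableEq G]
    (S : Finset G) (a b : G) : Prop :=
  ∃ (α β : ℂ) (t : ℕ → ℝ), β ≠ 0 ∧ ‖α‖ ^ 2 + ‖β‖ ^ 2 = 1 ∧
    Tendsto (fun k => (cayH S (t k)).mulVec ((Pi.single a 1 : G → ℂ))) atTop
      (nhds (α • (Pi.single a 1 : G → ℂ) + β • (Pi.single b 1 : G → ℂ)))

/-- `Cay(G,S)` exhibits fractional revival (FR) between `a` and `b`. -/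
def ExhibitsFR {G : Type*} [AddCommGroup G] [Fintype G] [DecidableEq G]
    (S : Finset G) (a b : G) : Prop :=
  ∃ (t : ℝ), 0 < t ∧ ∃ α β : ℂ, β ≠ 0 ∧ ‖α‖ ^ 2 + ‖β‖ ^ 2 = 1 ∧
    (cayH S t).mulVec ((Pi.single a 1 : G → ℂ)) =
      α • (Pi.single a 1 : G → ℂ) + β • (Pi.single b 1 : G → ℂ)

/-- `Cay(G,S)` exhibits pretty good state transfer (PGST) between `a` and `b`. -/
def ExhibitsPGST {G : Type*} [AddCommGroup G] [Fintype G] [DecidableEq G]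
    (S : Finset G) (a b : G) : Prop :=
  ∃ (β : ℂ) (t : ℕ → ℝ), ‖β‖ = 1 ∧
    Tendsto (fun k => (cayH S (t k)).mulVec ((Pi.single a 1 : G → ℂ))) atTop
      (nhds (β • (Pi.single b 1 : G → ℂ)))

/-- The eigenvalue `λ_r = Σ_{y ∈ S} exp(2πi r y / n)` of the circulant graph `Cay(ℤ_n, S)`. -/
noncomputable def circEig (n : ℕ) [NeZero n] (S : Finset (ZMod n)) (r : ℕ) : ℂ :=
  ∑ y ∈ S, Complex.exp (2 * Real.pi * Complex.I * r * y.val / n)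

/-!
Every additive character `ψ` of `G` is a left eigenvector of `cayAdj S` with eigenvalue
`λ_ψ = ∑ z ∈ S, ψ z`. Pairing `H(t_k) e_a → β e_b` with `ψ` gives `exp(-i t_k λ_ψ) → β ψ(b - a)`,
so a relation `∑ λ_{ψ_l} = ∑ λ_{φ_l}` forces `∏ ψ_l(b - a) = ∏ φ_l(b - a)`.

For the complement of `Cay(G, S)` take `Δ = n / p` and the characters
`ψ_{c,l}(x) = e((c + Δ l) x₀ + x₁)`. The removed set `S ∪ {0}` lies on the first axis, at points
`w` with `p ∤ w`, where `∑_{l < p} ψ_{c,l}` is a vanishing geometric sum; hence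
`∑_{l < p} λ_{ψ_{c,l}} = -p` for every `c`. Comparing `c = 1` with `c = 0` at
`b - a = (n / 2) e₀` gives `(-1)^p = 1`, impossible for odd `p`.
-/

section

attribute [local instance] Matrix.linftyOpNormedRing Matrix.linftyOpNormedAlgebra

theorem Matrix.vecMul_exp_of_vecMul_eq_smul {ι : Type*} [Fintype ι] [DecidableEq ι]
    {M : Matrix ι ι ℂ} {v : ι → ℂ} {μ : ℂ} (h : v ᵥ* M = μ • v) :
    v ᵥ* NormedSpace.exp M = NormedSpace.exp μ • v := by
  -- every row of `R` is `v`, so the eigen-relation reads `R * M = μ • R`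
  set R : Matrix ι ι ℂ := Matrix.of fun _ => v
  have hR : SemiconjBy R M (algebraMap ℂ _ μ) := by
    rw [SemiconjBy, Algebra.algebraMap_eq_smul_one, smul_mul_assoc, one_mul]
    ext i j
    simpa [R, Matrix.mul_apply, Matrix.vecMul, dotProduct] using congrFun h j
  have hexp := hR.exp_right
  rw [← NormedSpace.algebraMap_exp_comm, SemiconjBy, Algebra.algebraMap_eq_smul_one,
    smul_mul_assoc, one_mul] at hexp
  ext j
  have hj := congrFun (congrFun hexp j) j
  simp only [R, Matrix.mul_apply, Matrix.of_apply, Matrix.smul_apply, smul_eq_mul] at hj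
  exact hj

end

section Cayley

variable {G : Type*} [AddCommGroup G] [Fintype G] [DecidableEq G]

theorem vecMul_cayAdj_addChar (S : Finset G) (ψ : AddChar G ℂ) :
    ⇑ψ ᵥ* cayAdj S = (∑ z ∈ S, ψ z) • ⇑ψ := by
  ext y
  calc (⇑ψ ᵥ* cayAdj S) y = ∑ x, ψ x * if x - y ∈ S then 1 else 0 := rfl
    _ = ∑ z, ψ (z + y) * if z ∈ S then 1 else 0 := by
      rw [← Equiv.sum_comp (Equiv.addRight y)]
      simp only [Equiv.coe_addRight, add_sub_cancel_right]
    _ = (∑ z ∈ S, ψ z) * ψ y := by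
      simp only [AddChar.map_add_eq_mul, mul_ite, mul_one, mul_zero, Finset.sum_ite_mem,
        Finset.univ_inter, Finset.sum_mul]

theorem vecMul_cayH_addChar (S : Finset G) (ψ : AddChar G ℂ) (t : ℝ) :
    ⇑ψ ᵥ* cayH S t = Complex.exp (-(Complex.I * t) * ∑ z ∈ S, ψ z) • ⇑ψ := by
  rw [cayH, Complex.exp_eq_exp_ℂ]
  apply Matrix.vecMul_exp_of_vecMul_eq_smul
  rw [Matrix.vecMul_smul, vecMul_cayAdj_addChar, smul_smul]

theorem tendsto_exp_eigenvalue_of_tendsto_transfer {S : Finset G} {a b : G} {β : ℂ}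
    {t : ℕ → ℝ} (htend : Tendsto (fun k => (cayH S (t k)).mulVec (Pi.single a 1 : G → ℂ))
      atTop (nhds (β • (Pi.single b 1 : G → ℂ)))) (ψ : AddChar G ℂ) :
    Tendsto (fun k => Complex.exp (-(Complex.I * t k) * ∑ z ∈ S, ψ z)) atTop
      (nhds (β * ψ (b - a))) := by
  have hcont : Continuous fun v : G → ℂ => ⇑ψ ⬝ᵥ v :=
    continuous_const.dotProduct continuous_id
  have hpair := (hcont.tendsto _).comp htend
  have hψa : ψ a ≠ 0 := (AddChar.val_isUnit ψ a).ne_zero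
  simp only [Function.comp_def, dotProduct_mulVec, vecMul_cayH_addChar,
    dotProduct_smul, dotProduct_single, mul_one, smul_eq_mul] at hpair
  rw [AddChar.map_sub_eq_div, ← mul_div_assoc]
  simpa [hψa] using hpair.div_const (ψ a)

theorem ExhibitsPGST.prod_apply_sub_eq_of_sum_eq {S : Finset G} {a b : G}
    (hP : ExhibitsPGST S a b) {ι : Type*} (I : Finset ι) (ψ φ : ι → AddChar G ℂ)
    (h : ∑ i ∈ I, ∑ z ∈ S, ψ i z = ∑ i ∈ I, ∑ z ∈ S, φ i z) :
    ∏ i ∈ I, ψ i (b - a) = ∏ i ∈ I, φ i (b - a) := by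
  obtain ⟨β, t, hβ, htend⟩ := hP
  have hlim (χ : ι → AddChar G ℂ) : Tendsto
      (fun k => Complex.exp (-(Complex.I * t k) * ∑ i ∈ I, ∑ z ∈ S, χ i z)) atTop
      (nhds (β ^ I.card * ∏ i ∈ I, χ i (b - a))) := by
    have hprod := tendsto_finsetProd I
      fun i _ => tendsto_exp_eigenvalue_of_tendsto_transfer htend (χ i)
    rw [Finset.prod_mul_distrib, Finset.prod_const] at hprod
    refine hprod.congr fun k => ?_
    rw [Finset.mul_sum, Complex.exp_sum]
  have hβ0 : β ^ I.card ≠ 0 := pow_ne_zero _ (norm_ne_zero_iff.mp (by simp [hβ]))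
  exact mul_left_cancel₀ hβ0 (tendsto_nhds_unique (h ▸ hlim ψ) (hlim φ))

theorem AddChar.sum_univ_sdiff_eq_neg {ψ : AddChar G ℂ} (hψ : ψ ≠ 0) (T : Finset G) :
    ∑ z ∈ Finset.univ \ T, ψ z = -∑ z ∈ T, ψ z := by
  rw [Finset.sum_sdiff_eq_sub (Finset.subset_univ T), AddChar.sum_eq_zero_iff_ne_zero.mpr hψ,
    zero_sub]

end Cayley

namespace ZMod

theorem eq_zero_or_exists_eq_single_of_mem {n : ℕ} {ι : Type*} [Fintype ι] [DecidableEq ι]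
    {Δ m : ℕ} {y : Fin m → ZMod n} (hy : ∀ k, (Δ : ZMod n) * y k ≠ 0) (i : ι)
    {z : ι → ZMod n}
    (hz : z ∈ ((Finset.univ.image fun k => Pi.single i (y k)) ∪
      (Finset.univ.image fun k => Pi.single i (-(y k)))) ∪ {0}) :
    z = 0 ∨ ∃ w, (Δ : ZMod n) * w ≠ 0 ∧ z = Pi.single i w := by
  simp only [Finset.mem_union, Finset.mem_image, Finset.mem_univ, true_and,
    Finset.mem_singleton] at hz
  rcases hz with (⟨k, rfl⟩ | ⟨k, rfl⟩) | rfl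
  · exact .inr ⟨y k, hy k, rfl⟩
  · exact .inr ⟨-y k, by rw [mul_neg, neg_ne_zero]; exact hy k, rfl⟩
  · exact .inl rfl

variable {n : ℕ} [NeZero n]

theorem natCast_mul_eq_zero_iff_dvd_val {Δ p : ℕ} (hn : n = Δ * p) (hΔ : 0 < Δ)
    (w : ZMod n) : (Δ : ZMod n) * w = 0 ↔ p ∣ w.val := by
  subst hn
  rw [← natCast_zmod_val w, ← Nat.cast_mul, natCast_eq_zero_iff, val_natCast_of_lt w.val_lt,
    Nat.mul_dvd_mul_iff_left hΔ]

theorem stdAddChar_natCast_of_two_mul {q : ℕ} (hn : n = 2 * q) :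
    stdAddChar (q : ZMod n) = -1 := by
  have hq : 0 < q := by have := NeZero.pos n; omega
  have h2q : 2 • (q : ZMod n) = 0 := by
    rw [nsmul_eq_mul]
    exact_mod_cast (show ((2 * q : ℕ) : ZMod n) = 0 by rw [← hn, natCast_self])
  have hsq : stdAddChar (q : ZMod n) ^ 2 = 1 := by
    rw [← AddChar.map_nsmul_eq_pow, h2q, AddChar.map_zero_eq_one]
  have hne : stdAddChar (q : ZMod n) ≠ 1 := by
    rw [← AddChar.map_zero_eq_one (stdAddChar (N := n)), injective_stdAddChar.ne_iff, Ne,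
      natCast_eq_zero_iff]
    exact Nat.not_dvd_of_pos_of_lt hq (by omega)
  exact (sq_eq_one_iff.mp hsq).resolve_left hne

theorem sum_range_stdAddChar_mul_eq_zero {p Δ : ℕ} (hpΔ : ((p * Δ : ℕ) : ZMod n) = 0)
    {w : ZMod n} (hw : (Δ : ZMod n) * w ≠ 0) (c : ZMod n) :
    ∑ l ∈ Finset.range p, stdAddChar ((c + Δ * l : ZMod n) * w) = 0 := by
  set ζ := stdAddChar ((Δ : ZMod n) * w)
  have hterm (l : ℕ) : stdAddChar ((c + Δ * l : ZMod n) * w) = stdAddChar (c * w) * ζ ^ l := by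
    rw [← AddChar.map_nsmul_eq_pow, ← AddChar.map_add_eq_mul, nsmul_eq_mul]
    ring_nf
  have hζp : ζ ^ p = 1 := by
    rw [← AddChar.map_nsmul_eq_pow, nsmul_eq_mul, ← mul_assoc, ← Nat.cast_mul, hpΔ, zero_mul,
      AddChar.map_zero_eq_one]
  have hζ : ζ ≠ 1 := by
    rwa [← AddChar.map_zero_eq_one (stdAddChar (N := n)), injective_stdAddChar.ne_iff]
  simp only [hterm, ← Finset.mul_sum, geom_sum_eq hζ, hζp, sub_self, zero_div, mul_zero]

variable {ι : Type*} [Fintype ι]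

noncomputable def dotAddChar (r : ι → ZMod n) : AddChar (ι → ZMod n) ℂ :=
  stdAddChar.compAddMonoidHom
    { toFun := (r ⬝ᵥ ·), map_zero' := dotProduct_zero r, map_add' := dotProduct_add r }

@[simp]
theorem dotAddChar_apply (r x : ι → ZMod n) : dotAddChar r x = stdAddChar (r ⬝ᵥ x) := rfl

theorem dotAddChar_ne_zero [DecidableEq ι] {r : ι → ZMod n} (hr : r ≠ 0) :
    dotAddChar r ≠ 0 := by
  obtain ⟨j, hj⟩ := Function.ne_iff.mp hr
  refine AddChar.ne_zero_iff.mpr ⟨Pi.single j 1, ?_⟩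
  rwa [dotAddChar_apply, dotProduct_single, mul_one,
    ← AddChar.map_zero_eq_one (stdAddChar (N := n)), injective_stdAddChar.ne_iff]

theorem dotAddChar_single_add_single_apply_single [DecidableEq ι] {i j : ι} (hij : i ≠ j)
    (a b w : ZMod n) :
    dotAddChar (Pi.single i a + Pi.single j b) (Pi.single i w) = stdAddChar (a * w) := by
  rw [dotAddChar_apply, dotProduct_single, Pi.add_apply, Pi.single_eq_same,
    Pi.single_eq_of_ne hij, add_zero]

theorem sum_range_sum_univ_sdiff_dotAddChar [DecidableEq ι] [Fact (1 < n)] {p Δ : ℕ}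
    (hpΔ : ((p * Δ : ℕ) : ZMod n) = 0) {i j : ι} (hij : i ≠ j) {T : Finset (ι → ZMod n)}
    (hT0 : 0 ∈ T)
    (hT : ∀ z ∈ T, z = 0 ∨ ∃ w, (Δ : ZMod n) * w ≠ 0 ∧ z = Pi.single i w)
    (c : ZMod n) :
    ∑ l ∈ Finset.range p, ∑ z ∈ Finset.univ \ T,
      dotAddChar (Pi.single i (c + Δ * l : ZMod n) + Pi.single j 1) z = -p := by
  set ψ := fun l : ℕ =>
    dotAddChar (Pi.single i (c + Δ * l : ZMod n) + Pi.single j 1 : ι → ZMod n)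
  have hψ (l : ℕ) : ψ l ≠ 0 :=
    dotAddChar_ne_zero fun h => by simpa [hij.symm] using congrFun h j
  have hsum (z) (hz : z ∈ T) :
      ∑ l ∈ Finset.range p, ψ l z = if z = 0 then (p : ℂ) else 0 := by
    rcases hT z hz with rfl | ⟨w, hw, rfl⟩
    · simp [ψ]
    · have hw0 : (Pi.single i w : ι → ZMod n) ≠ 0 := fun h =>
        hw (by rw [Pi.single_eq_zero_iff.mp h, mul_zero])
      rw [if_neg hw0]
      simpa [ψ, dotAddChar_single_add_single_apply_single hij] using
        sum_range_stdAddChar_mul_eq_zero hpΔ hw c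
  calc ∑ l ∈ Finset.range p, ∑ z ∈ Finset.univ \ T, ψ l z
      = -∑ z ∈ T, ∑ l ∈ Finset.range p, ψ l z := by
        simp only [AddChar.sum_univ_sdiff_eq_neg (hψ _), Finset.sum_neg_distrib]
        rw [Finset.sum_comm]
    _ = -p := by rw [Finset.sum_congr rfl hsum, Finset.sum_ite_eq', if_pos hT0]

end ZMod

theorem stmt_17 (p s h n : ℕ) [NeZero n] (hpodd : Odd p)
    (hs : 2 ≤ s) (hh : 2 ≤ h) (hn : n = 2 * p ^ s)
    (m : ℕ) (y : Fin m → ZMod n) (hyp : ∀ i, ¬ p ∣ (y i).val) :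
    ∀ a b : Fin h → ZMod n,
      b - a = Pi.single (⟨0, by omega⟩ : Fin h) ((p ^ s : ℕ) : ZMod n) →
      ¬ ExhibitsPGST
          (Finset.univ \
            (((Finset.univ.image fun i => Pi.single (⟨0, by omega⟩ : Fin h) (y i)) ∪
              (Finset.univ.image fun i => Pi.single (⟨0, by omega⟩ : Fin h) (-(y i)))) ∪ {0}))
          a b := by
  intro a b hab hP
  set i₀ : Fin h := ⟨0, by omega⟩
  set i₁ : Fin h := ⟨1, by omega⟩
  have hi₀₁ : i₀ ≠ i₁ := by simp [i₀, i₁, Fin.ext_iff]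
  have : Fact (1 < n) := ⟨by have := Nat.one_le_pow s p hpodd.pos; omega⟩
  set Δ := 2 * p ^ (s - 1)
  have hΔ : 0 < Δ := by have := hpodd.pos; positivity
  have hnΔ : n = Δ * p := by rw [hn, mul_assoc, ← pow_succ, Nat.sub_add_cancel (by omega)]
  have hpΔ : ((p * Δ : ℕ) : ZMod n) = 0 := by rw [mul_comm, ← hnΔ, ZMod.natCast_self]
  have hΔq : (Δ : ZMod n) * (p ^ s : ℕ) = 0 := by
    rw [← Nat.cast_mul, ZMod.natCast_eq_zero_iff, hnΔ]
    exact mul_dvd_mul_left Δ (dvd_pow_self p (by omega))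
  have hy (k : Fin m) : (Δ : ZMod n) * y k ≠ 0 :=
    (ZMod.natCast_mul_eq_zero_iff_dvd_val hnΔ hΔ _).not.mpr (hyp k)
  have hsum := ZMod.sum_range_sum_univ_sdiff_dotAddChar hpΔ hi₀₁ (by simp)
    (fun _ => ZMod.eq_zero_or_exists_eq_single_of_mem hy i₀)
  have key := hP.prod_apply_sub_eq_of_sum_eq (Finset.range p)
    (fun l => ZMod.dotAddChar (Pi.single i₀ (1 + Δ * l : ZMod n) + Pi.single i₁ 1))
    (fun l => ZMod.dotAddChar (Pi.single i₀ (0 + Δ * l : ZMod n) + Pi.single i₁ 1))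
    (by rw [hsum, hsum])
  have hval (c : ZMod n) (l : ℕ) :
      ZMod.dotAddChar (Pi.single i₀ (c + Δ * l : ZMod n) + Pi.single i₁ 1) (b - a) =
        ZMod.stdAddChar (c * ((p ^ s : ℕ) : ZMod n)) := by
    rw [hab, ZMod.dotAddChar_single_add_single_apply_single hi₀₁, add_mul, mul_right_comm, hΔq,
      zero_mul, add_zero]
  simp only [hval, Finset.prod_const, Finset.card_range, one_mul, zero_mul,
    ZMod.stdAddChar_natCast_of_two_mul hn, AddChar.map_zero_eq_one, one_pow,
    hpodd.neg_one_pow] at key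
  norm_num at key
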